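/- arXiv:math/0410303 — 2 statements merged into one kernel-verified Lean document; each statement's English description precedes it below -/
import Mathlib

section
/- Let R be a commutative Noetherian ring, I an ideal of R, E an injective R-module, and M an R-module. The map Hom_R(M, E) → Hom_R((0 :_M I), E) given by restricting a homomorphism along the inclusion (0 :_M I) ⊆ M is surjective, and its kernel is the submodule I·Hom_R(M, E). -/
/-!
`Module.Injective R E` only tests extensions between modules in the universe of `E`, so we first
recover Baer's criterion. Given `φ : J →ₗ[R] E`, the ideal `A = ann (φ J)` has `R ⧸ A` small (it
embeds into `End (φ J)`), hence `R ⧸ A ^ (k + 1)` is small too, its graded pieces being finite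
`R ⧸ A`-modules; by Artin–Rees `J ⊓ A ^ (k + 1) ≤ A • J ≤ ker φ`, so `φ` factors through the small
module `R ⧸ A ^ (k + 1)`, where injectivity applies.

Surjectivity of the restriction is then Baer extension along `(0 :_M I) ⊆ M`. For the kernel, write
`I = (a₁, …, aₙ)`: the map `x ↦ (aᵢ • x)ᵢ : M → Mⁿ` has kernel `(0 :_M I)`, so a map `f` vanishing
on `(0 :_M I)` factors as `g ∘ (aᵢ • ·)ᵢ`, i.e. `f = ∑ aᵢ • (g ∘ single i) ∈ I • Hom(M, E)`.
-/

universe u v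

open Submodule LinearMap

section Smallness

variable {R : Type u} [CommRing R]

theorem Submodule.small_of_small_of_small_quotient {M : Type*} [AddCommGroup M] [Module R M]
    (N : Submodule R M) [Small.{v} N] [Small.{v} (M ⧸ N)] : Small.{v} M :=
  small_map (β := (M ⧸ N) × N) N.toAddSubgroup.addGroupEquivQuotientProdAddSubgroup

theorem small_quotient_annihilator (M : Type*) [AddCommGroup M] [Module R M] [Small.{v} M] :
    Small.{v} (R ⧸ Module.annihilator R M) :=
  have : Small.{v} (AddMonoid.End M) := small_of_injective DFunLike.coe_injective
  small_of_injective (RingHom.kerLift_injective (Module.toAddMonoidEnd R M))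

theorem small_of_le_annihilator {N : Type*} [AddCommGroup N] [Module R N] [Module.Finite R N]
    {A : Ideal R} [Small.{v} (R ⧸ A)] (hA : A ≤ Module.annihilator R N) : Small.{v} N :=
  letI : Module (R ⧸ A) N := Module.IsTorsionBySet.module fun x a =>
    Module.mem_annihilator.mp (hA a.2) x
  have : Module.Finite (R ⧸ A) N := Module.Finite.of_restrictScalars_finite R _ _
  Module.Finite.small (R ⧸ A) N

theorem small_quotient_pow [IsNoetherianRing R] {A : Ideal R} [Small.{v} (R ⧸ A)] (n : ℕ) :
    Small.{v} (R ⧸ A ^ n) := by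
  induction n with
  | zero =>
    rw [pow_zero, Ideal.one_eq_top]
    infer_instance
  | succ n ih =>
    let N := Submodule.map (A ^ (n + 1)).mkQ (A ^ n)
    have : Small.{v} ((R ⧸ A ^ (n + 1)) ⧸ N) :=
      small_map (quotientQuotientEquivQuotient _ _ (Ideal.pow_le_pow_right n.le_succ)).toEquiv
    have : Small.{v} N := small_of_le_annihilator (A := A) fun a ha => by
      refine Module.mem_annihilator.mpr fun ⟨_, y, hy, rfl⟩ => Subtype.ext ?_
      change a • Submodule.Quotient.mk y = (0 : R ⧸ A ^ (n + 1))
      rw [← Quotient.mk_smul, Quotient.mk_eq_zero, smul_eq_mul, pow_succ']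
      exact Ideal.mul_mem_mul ha hy
    exact Submodule.small_of_small_of_small_quotient N

theorem Ideal.exists_small_quotient_ker_le [IsNoetherianRing R] {E : Type v} [AddCommGroup E]
    [Module R E] {J : Ideal R} (φ : J →ₗ[R] E) :
    ∃ B : Ideal R, Small.{v} (R ⧸ B) ∧ ker (B.mkQ ∘ₗ J.subtype) ≤ ker φ := by
  set A := Module.annihilator R (range φ)
  have : Small.{v} (R ⧸ A) := small_quotient_annihilator _
  obtain ⟨k, hk⟩ := Ideal.exists_pow_inf_eq_pow_smul A (J : Submodule R R)
  have hAφ : A • ⊤ ≤ ker φ := smul_le.mpr fun a ha y _ => by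
    rw [mem_ker, map_smul]
    exact congr_arg Subtype.val (Module.mem_annihilator.mp ha ⟨φ y, mem_range_self φ y⟩)
  refine ⟨A ^ (k + 1), small_quotient_pow (k + 1), fun x hx => ?_⟩
  have hxB : (x : R) ∈ A ^ (k + 1) • (⊤ : Ideal R) ⊓ J := by
    refine ⟨?_, x.2⟩
    simpa [smul_eq_mul, Ideal.mul_top, Ideal.Quotient.eq_zero_iff_mem] using hx
  rw [hk (k + 1) k.le_succ, Nat.add_sub_cancel_left, pow_one] at hxB
  have hxAJ : (x : R) ∈ Submodule.map J.subtype (A • ⊤ : Submodule R J) := by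
    rw [map_smul'', map_subtype_top]
    exact Submodule.smul_mono le_rfl inf_le_right hxB
  obtain ⟨y, hy, hyx⟩ := Submodule.mem_map.mp hxAJ
  exact Subtype.ext hyx ▸ hAφ hy

end Smallness

theorem Module.Injective.exists_comp_eq_of_ker_le_of_small {R : Type u} [Ring R] {E : Type v}
    [AddCommGroup E] [Module R E] (hE : Module.Injective R E) {M N : Type*} [AddCommGroup M]
    [Module R M] [AddCommGroup N] [Module R N] [Small.{v} N] (φ : M →ₗ[R] N) (f : M →ₗ[R] E)
    (h : ker φ ≤ ker f) : ∃ g : N →ₗ[R] E, g ∘ₗ φ = f := by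
  let ι := (ker φ).liftQ φ le_rfl
  have hι : Function.Injective ι := ker_eq_bot.mp ((ker φ).ker_liftQ_eq_bot' φ rfl)
  have : Small.{v} (M ⧸ ker φ) := small_of_injective hι
  let eX := Shrink.linearEquiv R (M ⧸ ker φ)
  let eY := Shrink.linearEquiv R N
  obtain ⟨g, hg⟩ := hE.out (eY.symm.toLinearMap ∘ₗ ι ∘ₗ eX.toLinearMap)
    (eY.symm.injective.comp (hι.comp eX.injective)) ((ker φ).liftQ f h ∘ₗ eX.toLinearMap)
  refine ⟨g ∘ₗ eY.symm.toLinearMap, LinearMap.ext fun x => ?_⟩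
  simpa [eX, ι] using hg (eX.symm (Submodule.Quotient.mk x))

theorem Module.Baer.exists_comp_eq_of_ker_le {R : Type u} [Ring R] {E : Type v}
    [AddCommGroup E] [Module R E] (hE : Module.Baer R E) {M N : Type*} [AddCommGroup M]
    [Module R M] [AddCommGroup N] [Module R N] (φ : M →ₗ[R] N) (f : M →ₗ[R] E)
    (h : ker φ ≤ ker f) : ∃ g : N →ₗ[R] E, g ∘ₗ φ = f := by
  obtain ⟨g, hg⟩ := hE.extension_property ((ker φ).liftQ φ le_rfl)
    (ker_eq_bot.mp ((ker φ).ker_liftQ_eq_bot' φ rfl)) ((ker φ).liftQ f h)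
  refine ⟨g, ?_⟩
  rw [← (ker φ).liftQ_mkQ φ le_rfl, ← LinearMap.comp_assoc, hg, liftQ_mkQ]

theorem Module.Baer.of_injective_of_isNoetherianRing {R : Type u} [CommRing R] [IsNoetherianRing R]
    {E : Type v} [AddCommGroup E] [Module R E] (hE : Module.Injective R E) : Module.Baer R E := by
  intro J φ
  obtain ⟨B, hB, hφB⟩ := Ideal.exists_small_quotient_ker_le φ
  obtain ⟨g, hg⟩ := hE.exists_comp_eq_of_ker_le_of_small (B.mkQ ∘ₗ J.subtype) φ hφB
  exact ⟨g ∘ₗ B.mkQ, fun x hx => LinearMap.congr_fun hg ⟨x, hx⟩⟩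

section Restriction

variable {R : Type u} [CommRing R] {E : Type v} [AddCommGroup E] [Module R E]
  {M : Type*} [AddCommGroup M] [Module R M] (I : Ideal R)

theorem smul_top_le_ker_lcomp_torsionBySet_subtype :
    I • (⊤ : Submodule R (M →ₗ[R] E)) ≤ ker (lcomp R E (torsionBySet R M I).subtype) :=
  smul_le.mpr fun a ha f _ => by
    ext x
    change a • f x = 0
    rw [← map_smul, (mem_torsionBySet_iff _ _).mp x.2 ⟨a, ha⟩, map_zero]

theorem ker_lcomp_torsionBySet_subtype_le_smul_top (hE : Module.Baer R E) (hI : I.FG) :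
    ker (lcomp R E (torsionBySet R M I).subtype) ≤ I • ⊤ := by
  intro f hf
  obtain ⟨n, a, ha⟩ := Submodule.fg_iff_exists_fin_generating_family.mp hI
  let φ : M →ₗ[R] (Fin n → M) := ∑ i, a i • LinearMap.single R (fun _ => M) i
  have hφ : ker φ = torsionBySet R M I := by
    ext x
    rw [mem_ker, ← ha, ← torsionBySet_eq_torsionBySet_span, mem_torsionBySet_iff, funext_iff]
    simp [φ, Pi.single_apply]
  obtain ⟨g, rfl⟩ := hE.exists_comp_eq_of_ker_le φ f fun x hx =>
    LinearMap.congr_fun hf ⟨x, hφ ▸ hx⟩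
  rw [show g ∘ₗ φ = llcomp R M _ E g φ from rfl, map_sum]
  simp_rw [map_smul]
  exact sum_mem fun i _ => smul_mem_smul (ha ▸ subset_span ⟨i, rfl⟩) mem_top

end Restriction

/-- from the proof of Lemma 1. Let `R` be a commutative Noetherian ring,
`I` an ideal, `E` an injective `R`-module, and `M` an `R`-module.  The restriction map
`Hom_R(M, E) → Hom_R((0 :_M I), E)` along the inclusion `(0 :_M I) ⊆ M` is surjective, and
its kernel is `I·Hom_R(M, E)`.  Here `(0 :_M I) = {x ∈ M | I x = 0}` is realized as the
torsion submodule `Submodule.torsionBySet R M I`. -/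
theorem stmt_1 {R : Type*} [CommRing R] [IsNoetherianRing R] (I : Ideal R)
    (E : Type*) [AddCommGroup E] [Module R E] (hE : Module.Injective R E)
    (M : Type*) [AddCommGroup M] [Module R M] :
    Function.Surjective
      (LinearMap.lcomp R E (Submodule.torsionBySet R M (I : Set R)).subtype) ∧
    LinearMap.ker (LinearMap.lcomp R E (Submodule.torsionBySet R M (I : Set R)).subtype) =
      I • (⊤ : Submodule R (M →ₗ[R] E)) := by
  have hBaer := Module.Baer.of_injective_of_isNoetherianRing hE
  refine ⟨fun g => hBaer.extension_property _ (injective_subtype _) g, le_antisymm ?_ ?_⟩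
  · exact ker_lcomp_torsionBySet_subtype_le_smul_top I hBaer (IsNoetherian.noetherian I)
  · exact smul_top_le_ker_lcomp_torsionBySet_subtype I
end

section
/- Let R be a commutative Noetherian ring, I an ideal, T an R-module, and U, V, W, Z finitely generated submodules of T. Assume that Z ⊆ U or W ⊆ V. Then there exist finitely generated submodules A, B of T and a natural number k such that, for all n ≥ k, (U + I^n V) ∩ (Z + I^n W) = A + I^{n−k} B. -/
/-!
Both cases are the Artin–Rees lemma: an `I`-filtration lying below the stable filtration `IⁿX`
of a finitely generated (hence Noetherian) module `X` is itself stable. If `Z ≤ U`, the modular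
law rewrites the intersection as `Z ⊔ (U ⊔ IⁿV) ⊓ IⁿW`, and `(U ⊔ IⁿV) ⊓ IⁿW` lies below `IⁿW`.
If `W ≤ V`, it becomes `IⁿW ⊔ Z ⊓ (U ⊔ IⁿV)`; modulo `U` the filtration `Z ⊓ (U ⊔ IⁿV)` is
`Z̄ ⊓ IⁿV̄`, which lies below `IⁿV̄`, and what the quotient forgets is `Z ⊓ U`.
-/

open Submodule

namespace Ideal.Filtration

variable {R M M' : Type*} [CommRing R] [AddCommGroup M] [Module R M] [AddCommGroup M']
  [Module R M'] {I : Ideal R}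

def comap (F : I.Filtration M) (f : M' →ₗ[R] M) : I.Filtration M' where
  N i := (F.N i).comap f
  mono i := Submodule.comap_mono (F.mono i)
  smul_le i := (smul_comap_le_comap_smul f _ I).trans (Submodule.comap_mono (F.smul_le i))

theorem stable_of_le_stableFiltration [IsNoetherianRing R] {F : I.Filtration M}
    {X : Submodule R M} (hX : X.FG) (hF : F ≤ I.stableFiltration X) : F.Stable := by
  have : Module.Finite R X := Module.Finite.iff_fg.mpr hX
  have hFX : ∀ n, F.N n ≤ X := fun n => (hF n).trans smul_le_right
  have hstable : (F.comap X.subtype).Stable := by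
    refine (I.stableFiltration_stable ⊤).of_le fun n => ?_
    calc (F.N n).comap X.subtype ≤ (I ^ n • X).comap X.subtype := Submodule.comap_mono (hF n)
      _ = I ^ n • ⊤ := by
        rw [comap_smul'' X.injective_subtype X.range_subtype.ge, comap_subtype_self]
  obtain ⟨k, hk⟩ := hstable.exists_pow_smul_eq_of_ge
  refine stable_iff_exists_pow_smul_eq_of_ge.mpr ⟨k, fun n hn => ?_⟩
  have := congr_arg (Submodule.map X.subtype) (hk n hn)
  rwa [map_smul'', comap, map_comap_subtype, map_comap_subtype, inf_eq_right.mpr (hFX n),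
    inf_eq_right.mpr (hFX k)] at this

end Ideal.Filtration

namespace Submodule

variable {R T : Type*} [CommRing R] [IsNoetherianRing R] [AddCommGroup T] [Module R T]
  (I : Ideal R)

theorem exists_inf_sup_pow_smul_eq (U Z : Submodule R T) {V : Submodule R T} (hV : V.FG) :
    ∃ k, ∀ n ≥ k, Z ⊓ (U ⊔ I ^ n • V) = Z ⊓ U ⊔ I ^ (n - k) • (Z ⊓ (U ⊔ I ^ k • V)) := by
  let q := U.mkQ
  let G := I.trivialFiltration Z ⊓ (I.trivialFiltration U ⊔ I.stableFiltration V)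
  let Gq := I.trivialFiltration (Z.map q) ⊓ I.stableFiltration (V.map q)
  have hmap : ∀ n, (G.N n).map q = Gq.N n := fun n => by
    change (Z ⊓ (U ⊔ I ^ n • V)).map q = Z.map q ⊓ I ^ n • V.map q
    rw [← map_smul'', map_inf_eq_map_inf_comap, comap_map_mkQ]
  obtain ⟨k, hk⟩ := (Ideal.Filtration.stable_of_le_stableFiltration (hV.map q)
    (inf_le_right : Gq ≤ _)).exists_pow_smul_eq_of_ge
  refine ⟨k, fun n hn => ?_⟩
  change G.N n = Z ⊓ U ⊔ I ^ (n - k) • G.N k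
  have hsmul_le : I ^ (n - k) • G.N k ≤ G.N n := by
    simpa only [Nat.sub_add_cancel hn] using G.pow_smul_le (n - k) k
  -- modulo `U`, the filtration `G` is stable
  have hle_sup : G.N n ≤ U ⊔ I ^ (n - k) • G.N k := by
    rw [← comap_map_mkQ, map_smul'', hmap k, ← hk n hn, ← hmap n]
    exact le_comap_map _ _
  refine le_antisymm ?_ (sup_le (inf_le_inf_left _ le_sup_left) hsmul_le)
  calc G.N n ≤ Z ⊓ (U ⊔ I ^ (n - k) • G.N k) := le_inf inf_le_left hle_sup
    _ = Z ⊓ U ⊔ I ^ (n - k) • G.N k := by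
      rw [sup_comm, inf_comm, sup_inf_assoc_of_le _ (hsmul_le.trans inf_le_left : _ ≤ Z),
        inf_comm U, sup_comm]

theorem exists_sup_pow_smul_inf_eq_of_le_left {U Z : Submodule R T} (V : Submodule R T)
    {W : Submodule R T} (hW : W.FG) (hZU : Z ≤ U) :
    ∃ k, ∀ n ≥ k, (U ⊔ I ^ n • V) ⊓ (Z ⊔ I ^ n • W) =
      Z ⊔ I ^ (n - k) • ((U ⊔ I ^ k • V) ⊓ I ^ k • W) := by
  let F := (I.trivialFiltration U ⊔ I.stableFiltration V) ⊓ I.stableFiltration W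
  obtain ⟨k, hk⟩ := (Ideal.Filtration.stable_of_le_stableFiltration hW
    (inf_le_right : F ≤ _)).exists_pow_smul_eq_of_ge
  refine ⟨k, fun n hn => ?_⟩
  rw [inf_comm, sup_inf_assoc_of_le _ (hZU.trans le_sup_left), inf_comm]
  exact congr_arg (Z ⊔ ·) (hk n hn)

theorem exists_sup_pow_smul_inf_eq_of_le_right (U Z : Submodule R T) {V W : Submodule R T}
    (hV : V.FG) (hWV : W ≤ V) :
    ∃ k, ∀ n ≥ k, (U ⊔ I ^ n • V) ⊓ (Z ⊔ I ^ n • W) =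
      Z ⊓ U ⊔ I ^ (n - k) • (I ^ k • W ⊔ Z ⊓ (U ⊔ I ^ k • V)) := by
  obtain ⟨k, hk⟩ := exists_inf_sup_pow_smul_eq I U Z hV
  refine ⟨k, fun n hn => ?_⟩
  have hpow : I ^ (n - k) • I ^ k • W = I ^ n • W := by
    rw [smul_smul, ← pow_add, Nat.sub_add_cancel hn]
  rw [inf_comm, sup_comm, sup_inf_assoc_of_le _ ((smul_mono_right _ hWV).trans le_sup_right),
    hk n hn, smul_sup, hpow, sup_left_comm]

end Submodule

theorem stmt_2_general {R : Type*} [CommRing R] [IsNoetherianRing R] (I : Ideal R)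
    {T : Type*} [AddCommGroup T] [Module R T]
    (U V W Z : Submodule R T) (hV : V.FG) (hW : W.FG) (hZ : Z.FG)
    (h : Z ≤ U ∨ W ≤ V) :
    ∃ (A B : Submodule R T), A.FG ∧ B.FG ∧ ∃ k : ℕ, ∀ n ≥ k,
      (U ⊔ I ^ n • V) ⊓ (Z ⊔ I ^ n • W) = A ⊔ I ^ (n - k) • B := by
  rcases h with hZU | hWV
  · obtain ⟨k, hk⟩ := exists_sup_pow_smul_inf_eq_of_le_left I V hW hZU
    exact ⟨_, _, hZ, hW.of_le (inf_le_right.trans smul_le_right), k, hk⟩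
  · obtain ⟨k, hk⟩ := exists_sup_pow_smul_inf_eq_of_le_right I U Z hV hWV
    exact ⟨_, _, hZ.of_le inf_le_left,
      (hW.of_le smul_le_right).sup (hZ.of_le inf_le_left), k, hk⟩

/-- Lemma 2(a). Let `R` be a commutative Noetherian ring, `I` an ideal,
`T` an `R`-module, and `U`, `V`, `W`, `Z` finitely generated submodules of `T`.
Assume `Z ⊆ U` or `W ⊆ V`.  Then there exist finitely generated submodules `A`, `B` of `T`
and `k : ℕ` such that for all `n ≥ k`,
`(U + IⁿV) ∩ (Z + IⁿW) = A + I^(n-k) B`. -/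
theorem stmt_2 {R : Type*} [CommRing R] [IsNoetherianRing R] (I : Ideal R)
    {T : Type*} [AddCommGroup T] [Module R T]
    (U V W Z : Submodule R T) (hU : U.FG) (hV : V.FG) (hW : W.FG) (hZ : Z.FG)
    (h : Z ≤ U ∨ W ≤ V) :
    ∃ (A B : Submodule R T), A.FG ∧ B.FG ∧ ∃ k : ℕ, ∀ n ≥ k,
      (U ⊔ I ^ n • V) ⊓ (Z ⊔ I ^ n • W) = A ⊔ I ^ (n - k) • B :=
  stmt_2_general I U V W Z hV hW hZ h
end
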